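/- The set of positive rational numbers is countably infinite, via the explicit bijection n ↦ a(n) from ℕ≥1. -/

import Mathlib

/-!
Every `n ≥ 2` is `2k` or `2k + 1` with `1 ≤ k < n`, and `a (2k) = a k + 1 > 1` while
`a (2k + 1) = 1 / (a k + 1) < 1`. So the parity of `n` is read off from `a n` compared with `1`,
and `a n` determines `a k`; by induction `a` is injective. Conversely `p / r` is reached from
`(p - r) / r` when `r < p` and from `(r - p) / p` when `p < r`, which lowers `p + r`
(the subtractive Euclidean algorithm), so `a` hits every positive rational.
-/

lemma Nat.eq_one_or_exists_eq_two_mul_or_two_mul_add_one {n : ℕ} (hn : 1 ≤ n) :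
    n = 1 ∨ ∃ k, 1 ≤ k ∧ (n = 2 * k ∨ n = 2 * k + 1) := by
  obtain ⟨k, rfl | rfl⟩ := Nat.even_or_odd' n
  · exact .inr ⟨k, by omega, .inl rfl⟩
  · rcases Nat.eq_zero_or_pos k with rfl | hk
    · exact .inl rfl
    · exact .inr ⟨k, hk, .inr rfl⟩

@[elab_as_elim]
lemma Nat.binary_induction_from_one {P : ℕ → Prop} (one : P 1)
    (double : ∀ k, 1 ≤ k → P k → P (2 * k))
    (double_add_one : ∀ k, 1 ≤ k → P k → P (2 * k + 1)) {n : ℕ} (hn : 1 ≤ n) : P n := by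
  induction n using Nat.strong_induction_on with
  | _ n ih =>
    obtain rfl | ⟨k, hk, rfl | rfl⟩ := Nat.eq_one_or_exists_eq_two_mul_or_two_mul_add_one hn
    · exact one
    · exact double k hk (ih k (by omega) hk)
    · exact double_add_one k hk (ih k (by omega) hk)

structure IsRatTree (a : ℕ → ℚ) : Prop where
  apply_one : a 1 = 1
  apply_two_mul : ∀ n, 1 ≤ n → a (2 * n) = a n + 1
  apply_two_mul_add_one' : ∀ n, 1 ≤ n → a (2 * n + 1) = 1 / a (2 * n)

namespace IsRatTree

variable {a : ℕ → ℚ} (ha : IsRatTree a)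
include ha

lemma apply_two_mul_add_one {n : ℕ} (hn : 1 ≤ n) : a (2 * n + 1) = 1 / (a n + 1) := by
  rw [ha.apply_two_mul_add_one' n hn, ha.apply_two_mul n hn]

lemma apply_pos {n : ℕ} (hn : 1 ≤ n) : 0 < a n := by
  refine Nat.binary_induction_from_one ?_ (fun k hk ih => ?_) (fun k hk ih => ?_) hn
  · simp [ha.apply_one]
  · rw [ha.apply_two_mul k hk]; positivity
  · rw [ha.apply_two_mul_add_one hk]; positivity

lemma one_lt_apply_two_mul {n : ℕ} (hn : 1 ≤ n) : 1 < a (2 * n) := by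
  rw [ha.apply_two_mul n hn]
  linarith [ha.apply_pos hn]

lemma apply_two_mul_add_one_lt_one {n : ℕ} (hn : 1 ≤ n) : a (2 * n + 1) < 1 := by
  rw [ha.apply_two_mul_add_one hn, div_lt_one (by linarith [ha.apply_pos hn])]
  linarith [ha.apply_pos hn]

lemma injOn : Set.InjOn a {n | 1 ≤ n} := by
  intro n hn
  refine Nat.binary_induction_from_one ?_ (fun k hk ih => ?_) (fun k hk ih => ?_) hn
  · intro m hm hm1
    obtain rfl | ⟨j, hj, rfl | rfl⟩ := Nat.eq_one_or_exists_eq_two_mul_or_two_mul_add_one hm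
    · rfl
    · linarith [ha.apply_one, ha.one_lt_apply_two_mul hj]
    · linarith [ha.apply_one, ha.apply_two_mul_add_one_lt_one hj]
  · intro m hm hkm
    obtain rfl | ⟨j, hj, rfl | rfl⟩ := Nat.eq_one_or_exists_eq_two_mul_or_two_mul_add_one hm
    · linarith [ha.apply_one, ha.one_lt_apply_two_mul hk]
    · rw [ha.apply_two_mul k hk, ha.apply_two_mul j hj, add_left_inj] at hkm
      rw [ih hj hkm]
    · linarith [ha.one_lt_apply_two_mul hk, ha.apply_two_mul_add_one_lt_one hj]
  · intro m hm hkm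
    obtain rfl | ⟨j, hj, rfl | rfl⟩ := Nat.eq_one_or_exists_eq_two_mul_or_two_mul_add_one hm
    · linarith [ha.apply_one, ha.apply_two_mul_add_one_lt_one hk]
    · linarith [ha.one_lt_apply_two_mul hj, ha.apply_two_mul_add_one_lt_one hk]
    · rw [ha.apply_two_mul_add_one hk, ha.apply_two_mul_add_one hj, one_div, one_div, inv_inj,
        add_left_inj] at hkm
      rw [ih hj hkm]

lemma exists_apply_eq_div {p r : ℕ} (hp : 0 < p) (hr : 0 < r) : ∃ n, 1 ≤ n ∧ a n = p / r := by
  induction hs : p + r using Nat.strong_induction_on generalizing p r with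
  | _ s ih =>
    have hr' : (r : ℚ) ≠ 0 := by positivity
    rcases lt_trichotomy p r with hpr | rfl | hrp
    · obtain ⟨n, hn, hna⟩ := ih r (by omega) (p := r - p) (r := p) (by omega) hp (by omega)
      refine ⟨2 * n + 1, by omega, ?_⟩
      rw [ha.apply_two_mul_add_one hn, hna, Nat.cast_sub hpr.le, div_add_one (by positivity),
        one_div_div, sub_add_cancel]
    · exact ⟨1, le_rfl, by rw [ha.apply_one, div_self hr']⟩
    · obtain ⟨n, hn, hna⟩ := ih p (by omega) (p := p - r) (r := r) (by omega) hr (by omega)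
      refine ⟨2 * n, by omega, ?_⟩
      rw [ha.apply_two_mul n hn, hna, Nat.cast_sub hrp.le, div_add_one hr', sub_add_cancel]

lemma surjOn : Set.SurjOn a {n | 1 ≤ n} {q | 0 < q} := by
  intro q (hq : 0 < q)
  lift q to ℚ≥0 using hq.le
  obtain ⟨n, hn, hna⟩ := ha.exists_apply_eq_div (NNRat.num_pos.mpr (mod_cast hq)) q.den_pos
  refine ⟨n, hn, ?_⟩
  rw [hna, ← congrArg NNRat.cast (NNRat.num_div_den q)]
  push_cast
  rfl

lemma bijOn : Set.BijOn a {n | 1 ≤ n} {q | 0 < q} :=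
  ⟨fun _ hn => ha.apply_pos hn, ha.injOn, ha.surjOn⟩

end IsRatTree

theorem stmt17 (a : ℕ → ℚ) (h1 : a 1 = 1)
    (h2 : ∀ n : ℕ, 1 ≤ n → a (2 * n) = a n + 1)
    (h3 : ∀ n : ℕ, 1 ≤ n → a (2 * n + 1) = 1 / a (2 * n)) :
    Set.Countable {q : ℚ | 0 < q} ∧ Set.Infinite {q : ℚ | 0 < q} ∧
      Set.BijOn a {n : ℕ | 1 ≤ n} {q : ℚ | 0 < q} := by
  have hbij := IsRatTree.bijOn ⟨h1, h2, h3⟩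
  refine ⟨Set.to_countable _, ?_, hbij⟩
  rw [← hbij.image_eq]
  exact (Set.Ici_infinite 1).image hbij.injOn
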